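/- For any u, w, v ∈ ℂ, the matrix identity (i/2)·(V¹(u,w)·Λ·U(u) - Λ·U(u)·V¹(u,w)) + U(v) = V⁰(u,w,v) holds; that is, with m₁ᵒ = -(i/2)·Λ·U(u), one has -V¹(u,w)·m₁ᵒ - (i/2)·Λ·U(u)·V¹(u,w) + 2i·Λ·(-(i/2)·Λ·U(v)) = V⁰(u,w,v). -/
import Mathlib


open Complex Matrix ComplexConjugate

set_option maxHeartbeats 1000000

noncomputable section

/-- The diagonal matrix `Λ = diag(1,1,-1)`. -/
def Lam : Matrix (Fin 3) (Fin 3) ℂ := !![1, 0, 0; 0, 1, 0; 0, 0, -1]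

/-- The matrix `U(u)`. -/
def Umat (u : ℂ) : Matrix (Fin 3) (Fin 3) ℂ :=
  !![0, 0, u; 0, 0, conj u; -conj u, -u, 0]

/-- The matrix `V¹(u,w)`, where `w` plays the role of `u_x`. -/
def V1 (u w : ℂ) : Matrix (Fin 3) (Fin 3) ℂ :=
  (-2 * Complex.I) •
    !![(Complex.normSq u : ℂ), u ^ 2, w;
       (conj u) ^ 2, (Complex.normSq u : ℂ), conj w;
       conj w, w, -2 * (Complex.normSq u : ℂ)]

/-- The matrix `V⁰(u,w,v)`, where `w` plays the role of `u_x` and `v` that of `u_{xx}`. -/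
def V0 (u w v : ℂ) : Matrix (Fin 3) (Fin 3) ℂ :=
  (4 * (Complex.normSq u : ℂ)) • Umat u + Umat v -
    (u * conj w - w * conj u) • !![1, 0, 0; 0, -1, 0; 0, 0, 0]

/-- The identity `(i/2)·(V¹(u,w)·Λ·U(u) - Λ·U(u)·V¹(u,w)) + U(v) = V⁰(u,w,v)`; that is, with
`m₁ᵒ = -(i/2)·Λ·U(u)`, one has
`-V¹·m₁ᵒ - (i/2)·Λ·U(u)·V¹ + 2i·Λ·(-(i/2)·Λ·U(v)) = V⁰(u,w,v)`. -/
theorem V0_identity (u w v : ℂ) :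
    (Complex.I / 2) • (V1 u w * (Lam * Umat u) - Lam * Umat u * V1 u w) + Umat v =
      V0 u w v ∧
    -(V1 u w * ((-(Complex.I / 2)) • (Lam * Umat u))) -
      (Complex.I / 2) • (Lam * Umat u * V1 u w) +
      (2 * Complex.I) • (Lam * ((-(Complex.I / 2)) • (Lam * Umat v))) = V0 u w v := by
  have key : (Complex.I / 2) • (V1 u w * (Lam * Umat u) - Lam * Umat u * V1 u w) + Umat v =
      V0 u w v := by
    simp only [V1, V0, Lam, Umat, Matrix.smul_mul, Matrix.mul_smul, Matrix.mul_fin_three,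
      ← Complex.mul_conj]
    ext i j
    fin_cases i <;> fin_cases j <;>
      · simp [Matrix.vecHead, Matrix.vecTail]
        try ring_nf
        try simp only [Complex.I_sq]
        try ring
  refine ⟨key, ?_⟩
  rw [← key]
  simp only [V1, Lam, Umat, Matrix.smul_mul, Matrix.mul_smul, Matrix.mul_fin_three,
    ← Complex.mul_conj]
  ext i j
  fin_cases i <;> fin_cases j <;>
    · simp [Matrix.vecHead, Matrix.vecTail]
      try ring_nf
      try simp only [Complex.I_sq]
      try ring
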